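/- (Existence and uniqueness of the alternating walk inducing the orientation of the diagonals of a snake graph.) Let 𝒢 be the abstract snake graph with d tiles determined by a shape word f. Then: (i) every vertex of 𝒢 is an endpoint of at most one tile diagonal, and the vertices (0,0) and p_d+(1,1) lie on no diagonal; and (ii) for every perfect matching P of 𝒢 there exists a unique walk from the vertex (0,0) to the vertex p_d+(1,1) whose steps alternately traverse edges of P and tile diagonals, which begins and ends with an edge of P, and which traverses each of the d tile diagonals exactly once. -/
import Mathlib


/-!
Statement 4: existence and uniqueness of the alternating walk inducing the
orientation of the diagonals of a snake graph.
-/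

open Matrix Finset
open scoped Classical

namespace SnakeGraph

/-- A potential edge of the snake graph: its lower-left endpoint together with a flag,
`true` meaning horizontal (from `v` to `v + (1,0)`), `false` vertical (from `v` to `v + (0,1)`). -/
abbrev Edge := (ℤ × ℤ) × Bool

/-- The second endpoint of an edge. -/
def ept (e : Edge) : ℤ × ℤ := e.1 + (if e.2 then ((1 : ℤ), (0 : ℤ)) else (0, 1))

/-- `e` covers the vertex `v`. -/
def covers (e : Edge) (v : ℤ × ℤ) : Prop := v = e.1 ∨ v = ept e

/-- Positions of the tiles: `pos f 1 = (0,0)` and `pos f (j+1) = pos f j + (0,1)` or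
`pos f j + (1,0)` according to whether `f j` is `true` (north) or `false` (east). -/
def pos (f : ℕ → Bool) : ℕ → ℤ × ℤ
  | 0 => (0, 0)
  | 1 => (0, 0)
  | j + 2 => pos f (j + 1) + (if f (j + 1) then ((0 : ℤ), (1 : ℤ)) else (1, 0))

/-- South edge of tile `j`. -/
def S (f : ℕ → Bool) (j : ℕ) : Edge := (pos f j, true)

/-- North edge of tile `j`. -/
def N (f : ℕ → Bool) (j : ℕ) : Edge := (pos f j + (0, 1), true)

/-- West edge of tile `j`. -/
def W (f : ℕ → Bool) (j : ℕ) : Edge := (pos f j, false)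

/-- East edge of tile `j`. -/
def Ed (f : ℕ → Bool) (j : ℕ) : Edge := (pos f j + (1, 0), false)

/-- All edges of the abstract snake graph with `d` tiles. -/
def edges (d : ℕ) (f : ℕ → Bool) : Finset Edge :=
  (Finset.Icc 1 d).biUnion fun j => {S f j, N f j, W f j, Ed f j}

/-- All vertices (tile corners) of the abstract snake graph with `d` tiles. -/
def verts (d : ℕ) (f : ℕ → Bool) : Finset (ℤ × ℤ) :=
  (Finset.Icc 1 d).biUnion fun j =>
    {pos f j, pos f j + (1, 0), pos f j + (0, 1), pos f j + (1, 1)}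

/-- A perfect matching of the snake graph: a set of edges covering each vertex exactly once. -/
def IsPerfectMatching (d : ℕ) (f : ℕ → Bool) (P : Finset Edge) : Prop :=
  P ⊆ edges d f ∧ ∀ v ∈ verts d f, ∃! e, e ∈ P ∧ covers e v

/-- The `Finset` of all perfect matchings of the snake graph. -/
noncomputable def matchings (d : ℕ) (f : ℕ → Bool) : Finset (Finset Edge) :=
  (edges d f).powerset.filter fun P => IsPerfectMatching d f P

/-- The step from `u` to `v` traverses the diagonal of tile `j`. -/
def DiagStep (f : ℕ → Bool) (j : ℕ) (u v : ℤ × ℤ) : Prop :=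
  (u = pos f j + (0, 1) ∧ v = pos f j + (1, 0)) ∨
    (u = pos f j + (1, 0) ∧ v = pos f j + (0, 1))

/-- The step from `u` to `v` traverses an edge of `P`. -/
def EdgeStep (P : Finset Edge) (u v : ℤ × ℤ) : Prop :=
  ∃ e ∈ P, (u = e.1 ∧ v = ept e) ∨ (u = ept e ∧ v = e.1)

/-- `w` (restricted to indices `0,…,2d+1`) is an alternating walk for the perfect matching
`P`: it goes from `(0,0)` to `pos f d + (1,1)`, alternately traverses edges of `P` and tile
diagonals, begins and ends with an edge of `P`, and traverses each of the `d` diagonals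
exactly once. -/
def IsAltWalk (d : ℕ) (f : ℕ → Bool) (P : Finset Edge) (w : ℕ → ℤ × ℤ) : Prop :=
  w 0 = (0, 0) ∧ w (2 * d + 1) = pos f d + (1, 1) ∧
    (∀ i ≤ 2 * d, Even i → EdgeStep P (w i) (w (i + 1))) ∧
    (∀ i ≤ 2 * d, Odd i → ∃ j, 1 ≤ j ∧ j ≤ d ∧ DiagStep f j (w i) (w (i + 1))) ∧
    (∀ j, 1 ≤ j → j ≤ d → ∃! i, i ≤ 2 * d ∧ Odd i ∧ DiagStep f j (w i) (w (i + 1)))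

/-- coordinate sum of a vertex -/
abbrev vsum (v : ℤ × ℤ) : ℤ := v.1 + v.2

lemma vsum_add (p q : ℤ × ℤ) : vsum (p + q) = vsum p + vsum q := by
  simp [vsum, Prod.fst_add, Prod.snd_add]; ring

lemma pos_succ (f : ℕ → Bool) (j : ℕ) (hj : 1 ≤ j) :
    pos f (j + 1) = pos f j + (if f j then ((0:ℤ),(1:ℤ)) else (1,0)) := by
  obtain ⟨k, rfl⟩ := Nat.exists_eq_add_of_le' hj
  rfl

lemma vsum_pos (f : ℕ → Bool) : ∀ j, 1 ≤ j → vsum (pos f j) = (j : ℤ) - 1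
  | 1, _ => by simp [pos, vsum]
  | (k+2), _ => by
    have ih := vsum_pos f (k+1) (by omega)
    rw [show k+2 = (k+1)+1 from rfl, pos_succ f (k+1) (by omega), vsum_add, ih]
    cases f (k+1) <;> simp [vsum]

lemma addadd (p : ℤ × ℤ) (a b c e : ℤ) : p + (a, b) + (c, e) = p + (a + c, b + e) := by
  simp [Prod.ext_iff, Prod.fst_add, Prod.snd_add]; constructor <;> ring

lemma ept_true (x : ℤ × ℤ) : ept (x, true) = x + (1,0) := rfl
lemma ept_false (x : ℤ × ℤ) : ept (x, false) = x + (0,1) := rfl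

lemma vsum_ept (e : Edge) : vsum (ept e) = vsum e.1 + 1 := by
  obtain ⟨x, b⟩ := e
  cases b <;> simp [ept_true, ept_false, vsum_add, vsum] <;> ring

lemma fst_ne (e : Edge) : e.1 ≠ ept e := by
  intro h
  have := vsum_ept e
  rw [← h] at this
  omega

lemma diag_ne (p : ℤ × ℤ) : p + ((0:ℤ),(1:ℤ)) ≠ p + (1,0) := by
  simp [Prod.ext_iff, Prod.fst_add]

lemma mem_verts {d : ℕ} {f : ℕ → Bool} {v : ℤ × ℤ} : v ∈ verts d f ↔ ∃ j, 1 ≤ j ∧ j ≤ d ∧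
    (v = pos f j ∨ v = pos f j + (1,0) ∨ v = pos f j + (0,1) ∨ v = pos f j + (1,1)) := by
  simp [verts, Finset.mem_biUnion, Finset.mem_Icc, and_assoc]

lemma mem_edges {d : ℕ} {f : ℕ → Bool} {e : Edge} : e ∈ edges d f ↔ ∃ j, 1 ≤ j ∧ j ≤ d ∧
    (e = S f j ∨ e = N f j ∨ e = W f j ∨ e = Ed f j) := by
  simp [edges, Finset.mem_biUnion, Finset.mem_Icc, and_assoc]

lemma vsum_c10 (p : ℤ × ℤ) : vsum (p + ((1:ℤ),(0:ℤ))) = vsum p + 1 := by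
  rw [vsum_add]; simp [vsum]

lemma vsum_c01 (p : ℤ × ℤ) : vsum (p + ((0:ℤ),(1:ℤ))) = vsum p + 1 := by
  rw [vsum_add]; simp [vsum]

lemma vsum_c11 (p : ℤ × ℤ) : vsum (p + ((1:ℤ),(1:ℤ))) = vsum p + 2 := by
  rw [vsum_add]; simp [vsum]

lemma corner_mem {d : ℕ} {f : ℕ → Bool} {j : ℕ} (hj1 : 1 ≤ j) (hjd : j ≤ d) :
    pos f j ∈ verts d f ∧ pos f j + (1,0) ∈ verts d f ∧
    pos f j + (0,1) ∈ verts d f ∧ pos f j + (1,1) ∈ verts d f := by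
  refine ⟨?_, ?_, ?_, ?_⟩ <;> rw [mem_verts] <;> exact ⟨j, hj1, hjd, by tauto⟩

lemma vsum_nonneg {d : ℕ} {f : ℕ → Bool} {v : ℤ × ℤ} (hv : v ∈ verts d f) : 0 ≤ vsum v := by
  obtain ⟨j, hj1, hjd, h⟩ := mem_verts.1 hv
  have := vsum_pos f j hj1
  rcases h with rfl | rfl | rfl | rfl <;>
    [skip; rw [vsum_c10]; rw [vsum_c01]; rw [vsum_c11]] <;> omega

lemma vsum_le {d : ℕ} {f : ℕ → Bool} {v : ℤ × ℤ} (hv : v ∈ verts d f) : vsum v ≤ d + 1 := by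
  obtain ⟨j, hj1, hjd, h⟩ := mem_verts.1 hv
  have := vsum_pos f j hj1
  have : (j : ℤ) ≤ d := by exact_mod_cast hjd
  rcases h with rfl | rfl | rfl | rfl <;>
    [skip; rw [vsum_c10]; rw [vsum_c01]; rw [vsum_c11]] <;> omega

lemma level_zero {d : ℕ} {f : ℕ → Bool} {v : ℤ × ℤ} (hv : v ∈ verts d f)
    (h : vsum v = 0) : v = (0,0) := by
  obtain ⟨j, hj1, hjd, hc⟩ := mem_verts.1 hv
  have hs := vsum_pos f j hj1
  rcases hc with rfl | rfl | rfl | rfl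
  · -- vsum = j - 1 = 0 so j = 1
    have hj : j = 1 := by omega
    subst hj; rfl
  · rw [vsum_c10] at h; omega
  · rw [vsum_c01] at h; omega
  · rw [vsum_c11] at h; omega

lemma pos_succ_mem {f : ℕ → Bool} {j : ℕ} (hj : 1 ≤ j) :
    pos f (j+1) = pos f j + (0,1) ∨ pos f (j+1) = pos f j + (1,0) := by
  rw [pos_succ f j hj]
  cases f j <;> simp

lemma pos_pred_corner {f : ℕ → Bool} {j : ℕ} (hj : 1 ≤ j) :
    pos f j + ((1:ℤ),(1:ℤ)) = pos f (j+1) + (0,1) ∨ pos f j + ((1:ℤ),(1:ℤ)) = pos f (j+1) + (1,0) := by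
  rw [pos_succ f j hj]
  cases f j with
  | false => left; rw [addadd]; norm_num
  | true => right; rw [addadd]; norm_num

lemma level_mid {d : ℕ} {f : ℕ → Bool} {v : ℤ × ℤ} {j : ℕ} (hv : v ∈ verts d f)
    (hj1 : 1 ≤ j) (hjd : j ≤ d) (h : vsum v = j) :
    v = pos f j + (0,1) ∨ v = pos f j + (1,0) := by
  obtain ⟨j', hj1', hjd', hc⟩ := mem_verts.1 hv
  have hs := vsum_pos f j' hj1'
  rcases hc with rfl | rfl | rfl | rfl
  · -- vsum = j' - 1 = j, so j' = j + 1
    have hj' : j' = j + 1 := by omega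
    subst hj'
    exact pos_succ_mem hj1
  · have hj' : j' = j := by rw [vsum_c10] at h; omega
    subst hj'; right; rfl
  · have hj' : j' = j := by rw [vsum_c01] at h; omega
    subst hj'; left; rfl
  · have hj' : j = j' + 1 := by rw [vsum_c11] at h; omega
    subst hj'
    exact pos_pred_corner hj1'

lemma level_top {d : ℕ} {f : ℕ → Bool} {v : ℤ × ℤ} (hv : v ∈ verts d f)
    (hd : 1 ≤ d) (h : vsum v = d + 1) : v = pos f d + (1,1) := by
  obtain ⟨j', hj1', hjd', hc⟩ := mem_verts.1 hv
  have hs := vsum_pos f j' hj1'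
  rcases hc with rfl | rfl | rfl | rfl
  · omega
  · rw [vsum_c10] at h; omega
  · rw [vsum_c01] at h; omega
  · have : j' = d := by rw [vsum_c11] at h; omega
    subst this; rfl

lemma edge_cases {d : ℕ} {f : ℕ → Bool} {e : Edge} (he : e ∈ edges d f) :
    ∃ j, 1 ≤ j ∧ j ≤ d ∧
    ((e.1 = pos f j ∧ ept e = pos f j + (1,0)) ∨
     (e.1 = pos f j + (0,1) ∧ ept e = pos f j + (1,1)) ∨
     (e.1 = pos f j ∧ ept e = pos f j + (0,1)) ∨
     (e.1 = pos f j + (1,0) ∧ ept e = pos f j + (1,1))) := by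
  obtain ⟨j, hj1, hjd, hc⟩ := mem_edges.1 he
  refine ⟨j, hj1, hjd, ?_⟩
  rcases hc with rfl | rfl | rfl | rfl
  · exact Or.inl ⟨rfl, rfl⟩
  · refine Or.inr (Or.inl ⟨rfl, ?_⟩)
    rw [N, ept_true, addadd]; norm_num
  · exact Or.inr (Or.inr (Or.inl ⟨rfl, rfl⟩))
  · refine Or.inr (Or.inr (Or.inr ⟨rfl, ?_⟩))
    rw [Ed, ept_false, addadd]; norm_num

lemma edge_ends_mem {d : ℕ} {f : ℕ → Bool} {e : Edge} (he : e ∈ edges d f) :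
    e.1 ∈ verts d f ∧ ept e ∈ verts d f := by
  obtain ⟨j, hj1, hjd, hc⟩ := edge_cases he
  obtain ⟨m1, m2, m3, m4⟩ := corner_mem (f := f) hj1 hjd
  rcases hc with ⟨h1, h2⟩ | ⟨h1, h2⟩ | ⟨h1, h2⟩ | ⟨h1, h2⟩ <;> rw [h1, h2] <;> tauto

/-- The other endpoint of the matching edge at `v`. -/
noncomputable def oe (P : Finset Edge) (v : ℤ × ℤ) : ℤ × ℤ :=
  if h : ∃ e, e ∈ P ∧ covers e v then
    (if v = h.choose.1 then ept h.choose else h.choose.1) else v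

lemma oe_spec {P : Finset Edge} {v : ℤ × ℤ} (h : ∃ e, e ∈ P ∧ covers e v) :
    ∃ e, e ∈ P ∧ ((v = e.1 ∧ oe P v = ept e) ∨ (v = ept e ∧ oe P v = e.1)) := by
  refine ⟨h.choose, h.choose_spec.1, ?_⟩
  rw [oe, dif_pos h]
  rcases h.choose_spec.2 with h1 | h1
  · exact Or.inl ⟨h1, if_pos h1⟩
  · by_cases h2 : v = h.choose.1
    · exact Or.inl ⟨h2, if_pos h2⟩
    · exact Or.inr ⟨h1, if_neg h2⟩

/-- The other endpoint of the diagonal through `v`. -/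
noncomputable def dpart (f : ℕ → Bool) (v : ℤ × ℤ) : ℤ × ℤ :=
  if v = pos f (v.1 + v.2).toNat + (0,1) then pos f (v.1 + v.2).toNat + (1,0)
  else pos f (v.1 + v.2).toNat + (0,1)

lemma dpart_spec {f : ℕ → Bool} {j : ℕ} {v : ℤ × ℤ} (hs : vsum v = (j : ℤ))
    (hv : v = pos f j + (0,1) ∨ v = pos f j + (1,0)) :
    (v = pos f j + (0,1) ∧ dpart f v = pos f j + (1,0)) ∨
    (v = pos f j + (1,0) ∧ dpart f v = pos f j + (0,1)) := by
  have ht : (v.1 + v.2).toNat = j := by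
    have : v.1 + v.2 = (j : ℤ) := hs
    omega
  rcases hv with h | h
  · exact Or.inl ⟨h, by rw [dpart, ht, if_pos h]⟩
  · refine Or.inr ⟨h, ?_⟩
    rw [dpart, ht, if_neg ?_]
    rw [h]; exact fun hc => diag_ne _ hc.symm

/-- The alternating walk determined by a perfect matching. -/
noncomputable def walk (f : ℕ → Bool) (P : Finset Edge) : ℕ → ℤ × ℤ
  | 0 => (0, 0)
  | i + 1 => if Even i then oe P (walk f P i) else dpart f (walk f P i)

lemma walk_even (f : ℕ → Bool) (P : Finset Edge) (m : ℕ) :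
    walk f P (2 * m + 1) = oe P (walk f P (2 * m)) := by
  rw [walk, if_pos (even_two_mul m)]

lemma walk_odd (f : ℕ → Bool) (P : Finset Edge) (m : ℕ) :
    walk f P (2 * m + 2) = dpart f (walk f P (2 * m + 1)) := by
  rw [show 2*m+2 = (2*m+1)+1 from rfl, walk, if_neg (by simp [Nat.even_add_one, parity_simps])]

lemma edge_two {e : Edge} {u v : ℤ × ℤ}
    (h : (u = e.1 ∧ v = ept e) ∨ (u = ept e ∧ v = e.1)) : covers e u ∧ covers e v := by
  rcases h with ⟨h1, h2⟩ | ⟨h1, h2⟩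
  · exact ⟨Or.inl h1, Or.inr h2⟩
  · exact ⟨Or.inr h1, Or.inl h2⟩

lemma covers_vsum {e : Edge} {x : ℤ × ℤ} (hx : covers e x) :
    vsum x = vsum e.1 ∨ vsum x = vsum e.1 + 1 := by
  have := vsum_ept e
  rcases hx with rfl | rfl
  · exact Or.inl rfl
  · exact Or.inr this

lemma covers_eq_of_vsum {e : Edge} {x y : ℤ × ℤ} (hx : covers e x) (hy : covers e y)
    (h : vsum x = vsum y) : x = y := by
  have := vsum_ept e
  rcases hx with rfl | rfl <;> rcases hy with rfl | rfl <;> first | rfl | omega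

lemma oe_step {d : ℕ} {f : ℕ → Bool} {P : Finset Edge} (hP : IsPerfectMatching d f P)
    {v : ℤ × ℤ} (hv : v ∈ verts d f) :
    ∃ e, e ∈ P ∧ covers e v ∧ covers e (oe P v) ∧ oe P v ∈ verts d f ∧
      ((v = e.1 ∧ oe P v = ept e) ∨ (v = ept e ∧ oe P v = e.1)) ∧
      (vsum (oe P v) = vsum v + 1 ∨ vsum (oe P v) = vsum v - 1) := by
  have hex : ∃ e, e ∈ P ∧ covers e v := (hP.2 v hv).exists
  obtain ⟨e, heP, hc⟩ := oe_spec hex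
  have hm := edge_ends_mem (hP.1 heP)
  have hvs := vsum_ept e
  obtain ⟨hcv, hco⟩ := edge_two hc
  refine ⟨e, heP, hcv, hco, ?_, hc, ?_⟩
  · rcases hco with h | h <;> rw [h] <;> [exact hm.1; exact hm.2]
  · rcases hc with ⟨h1, h2⟩ | ⟨h1, h2⟩ <;> rw [h2, h1] <;> omega

lemma walk_inv {d : ℕ} {f : ℕ → Bool} {P : Finset Edge} (hd : 1 ≤ d)
    (hP : IsPerfectMatching d f P) :
    ∀ k, k ≤ d →
      (∀ m ≤ k, walk f P (2*m) ∈ verts d f ∧ vsum (walk f P (2*m)) = m ∧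
        EdgeStep P (walk f P (2*m)) (walk f P (2*m+1)) ∧
        walk f P (2*m+1) ∈ verts d f ∧ vsum (walk f P (2*m+1)) = m + 1) ∧
      (∀ m < k,
        (walk f P (2*m+1) = pos f (m+1) + (0,1) ∧ walk f P (2*m+2) = pos f (m+1) + (1,0)) ∨
        (walk f P (2*m+1) = pos f (m+1) + (1,0) ∧ walk f P (2*m+2) = pos f (m+1) + (0,1))) := by
  have h00 : ((0,0) : ℤ × ℤ) ∈ verts d f := (corner_mem (le_refl 1) hd).1
  have hw0 : walk f P 0 = (0,0) := rfl
  intro k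
  induction k with
  | zero =>
    intro _
    refine ⟨?_, fun m hm => absurd hm (Nat.not_lt_zero m)⟩
    intro m hm
    have hm0 : m = 0 := Nat.le_zero.1 hm
    subst hm0
    obtain ⟨e, heP, hcv, hco, hoem, hc, hvs⟩ := oe_step hP (hw0 ▸ h00)
    have hv0 : vsum (walk f P 0) = 0 := by rw [hw0]; simp [vsum]
    have hup : vsum (oe P (walk f P 0)) = 1 := by
      rcases hvs with h | h
      · omega
      · exfalso; have := vsum_nonneg hoem; omega
    have hw1 : walk f P (2*0+1) = oe P (walk f P (2*0)) := walk_even f P 0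
    refine ⟨hw0 ▸ h00, hv0, ⟨e, heP, by rw [hw1]; exact hc⟩, by rw [hw1]; exact hoem, ?_⟩
    rw [hw1]; simp [hup]
  | succ k ih =>
    intro hk1
    obtain ⟨IHB, IHC⟩ := ih (by omega)
    obtain ⟨hBk1, hBk2, hBk3, hBk4, hBk5⟩ := IHB k le_rfl
    -- diagonal step C(k)
    have hcast : vsum (walk f P (2*k+1)) = ((k+1 : ℕ) : ℤ) := by rw [hBk5]; push_cast; ring
    have hlev := level_mid hBk4 (by omega) hk1 hcast
    have hCk := dpart_spec (f := f) hcast hlev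
    rw [← walk_odd f P k] at hCk
    -- vertex walk (2k+2)
    have hposv : vsum (pos f (k+1)) = (k : ℤ) := by
      have := vsum_pos f (k+1) (by omega); push_cast at this ⊢; omega
    obtain ⟨cm1, cm2, cm3, cm4⟩ := corner_mem (f := f) (j := k+1) (by omega) hk1
    have hw22mem : walk f P (2*k+2) ∈ verts d f := by
      rcases hCk with ⟨_, h2⟩ | ⟨_, h2⟩ <;> rw [h2] <;> assumption
    have hw22s : vsum (walk f P (2*k+2)) = (k : ℤ) + 1 := by
      rcases hCk with ⟨_, h2⟩ | ⟨_, h2⟩ <;> rw [h2] <;>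
        [rw [vsum_c10]; rw [vsum_c01]] <;> omega
    have hne2221 : walk f P (2*k+2) ≠ walk f P (2*k+1) := by
      rcases hCk with ⟨h1, h2⟩ | ⟨h1, h2⟩ <;> rw [h1, h2]
      · exact fun hc => diag_ne _ hc.symm
      · exact diag_ne _
    -- the up-step B(k+1)
    obtain ⟨e, heP, hcv, hco, hoem, hc, hvs⟩ := oe_step hP hw22mem
    have hup : vsum (oe P (walk f P (2*k+2))) = (k : ℤ) + 2 := by
      rcases hvs with h | h
      · omega
      exfalso
      -- the matched edge at walk (2k+2) goes down : derive a contradiction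
      set u := oe P (walk f P (2*k+2)) with hu
      have hus : vsum u = (k : ℤ) := by omega
      rcases Nat.eq_zero_or_pos k with hk0 | hkpos
      · -- k = 0 : u = (0,0) = walk 0
        subst hk0
        have hu0 : u = (0,0) := level_zero hoem (by omega)
        obtain ⟨e0, he0P, hc0⟩ := hBk3
        obtain ⟨hc0u, hc0v⟩ := edge_two hc0
        have he_eq : e = e0 := (hP.2 (0,0) h00).unique
          ⟨heP, hu0 ▸ hco⟩ ⟨he0P, hw0 ▸ hc0u⟩
        have : walk f P (2*0+2) = walk f P (2*0+1) :=
          covers_eq_of_vsum (he_eq ▸ hcv) hc0v (by omega)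
        exact hne2221 this
      · -- k ≥ 1 : u ∈ {a_k, b_k} = {walk (2(k-1)+1), walk (2(k-1)+2)}
        obtain ⟨m, rfl⟩ : ∃ m, k = m + 1 := ⟨k - 1, by omega⟩
        have hucast : vsum u = ((m+1 : ℕ) : ℤ) := by push_cast; omega
        have hulev := level_mid hoem (by omega) (by omega) hucast
        have hCm := IHC m (by omega)
        obtain ⟨hBm1, hBm2, hBm3, hBm4, hBm5⟩ := IHB m (by omega)
        have hucase : u = walk f P (2*m+1) ∨ u = walk f P (2*m+2) := by
          rcases hulev with h | h <;> rcases hCm with ⟨h1, h2⟩ | ⟨h1, h2⟩ <;>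
            [exact Or.inl (h.trans h1.symm); exact Or.inr (h.trans h2.symm);
             exact Or.inr (h.trans h2.symm); exact Or.inl (h.trans h1.symm)]
        rcases hucase with hcase | hcase
        · -- u = walk (2m+1), matched to walk (2m)
          obtain ⟨em, hemP, hcm⟩ := hBm3
          obtain ⟨hcmu, hcmv⟩ := edge_two hcm
          have he_eq : e = em := (hP.2 u hoem).unique
            ⟨heP, hco⟩ ⟨hemP, hcase ▸ hcmv⟩
          have h1 := covers_vsum (he_eq ▸ hcv)
          have h2 := covers_vsum hcmu
          rw [hBm2] at h2
          rw [hw22s] at h1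
          push_cast at h1 h2
          omega
        · -- u = walk (2m+2) = walk (2k), matched to walk (2k+1)
          have h2eq : 2*(m+1) = 2*m+2 := by ring
          rw [← h2eq] at hcase
          obtain ⟨ek, hekP, hck⟩ := hBk3
          obtain ⟨hcku, hckv⟩ := edge_two hck
          have he_eq : e = ek := (hP.2 u hoem).unique
            ⟨heP, hco⟩ ⟨hekP, hcase ▸ hcku⟩
          have : walk f P (2*(m+1)+2) = walk f P (2*(m+1)+1) :=
            covers_eq_of_vsum (he_eq ▸ hcv) hckv (by rw [hw22s, hBk5])
          exact hne2221 this
    -- assemble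
    have hw23 : walk f P (2*(k+1)+1) = oe P (walk f P (2*(k+1))) := walk_even f P (k+1)
    have h2eq : 2*(k+1) = 2*k+2 := by ring
    rw [h2eq] at hw23
    constructor
    · intro m hm
      rcases Nat.lt_or_ge m (k+1) with h | h
      · exact IHB m (by omega)
      have hmeq : m = k + 1 := by omega
      subst hmeq
      rw [h2eq]
      refine ⟨hw22mem, by rw [hw22s]; push_cast; ring, ⟨e, heP, by rw [hw23]; exact hc⟩,
        by rw [hw23]; exact hoem, ?_⟩
      rw [hw23, hup]; push_cast; ring
    · intro m hm
      rcases Nat.lt_or_ge m k with h | h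
      · exact IHC m h
      have hmeq : m = k := by omega
      subst hmeq
      exact hCk

lemma diag_vsum {f : ℕ → Bool} {j : ℕ} {v : ℤ × ℤ} (hj : 1 ≤ j)
    (h : v = pos f j + (0,1) ∨ v = pos f j + (1,0)) : vsum v = (j : ℤ) := by
  have := vsum_pos f j hj
  rcases h with rfl | rfl <;> [rw [vsum_c01]; rw [vsum_c10]] <;> omega

theorem altWalk_exists_unique' (d : ℕ) (hd : 1 ≤ d) (f : ℕ → Bool) :
    ((∀ v ∈ verts d f, ∀ j j', 1 ≤ j → j ≤ d → 1 ≤ j' → j' ≤ d →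
        (v = pos f j + (0, 1) ∨ v = pos f j + (1, 0)) →
        (v = pos f j' + (0, 1) ∨ v = pos f j' + (1, 0)) → j = j') ∧
      (∀ j, 1 ≤ j → j ≤ d →
        ¬(((0, 0) : ℤ × ℤ) = pos f j + (0, 1) ∨ ((0, 0) : ℤ × ℤ) = pos f j + (1, 0)) ∧
        ¬(pos f d + (1, 1) = pos f j + (0, 1) ∨ pos f d + (1, 1) = pos f j + (1, 0)))) ∧
    (∀ P : Finset Edge, IsPerfectMatching d f P →
      ∃ w : ℕ → ℤ × ℤ, IsAltWalk d f P w ∧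
        ∀ w' : ℕ → ℤ × ℤ, IsAltWalk d f P w' → ∀ i ≤ 2 * d + 1, w' i = w i) := by
  constructor
  · constructor
    · intro v _ j j' hj1 _ hj1' _ h h'
      have s1 := diag_vsum hj1 h
      have s2 := diag_vsum hj1' h'
      omega
    · intro j hj1 hjd
      constructor
      · intro h
        have := diag_vsum hj1 h
        simp [vsum] at this
        omega
      · intro h
        have h1 := diag_vsum hj1 h
        have h2 : vsum (pos f d + ((1:ℤ),(1:ℤ))) = (d : ℤ) + 1 := by
          rw [vsum_c11]; have := vsum_pos f d hd; omega
        omega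
  · intro P hP
    obtain ⟨HB, HC⟩ := walk_inv hd hP d le_rfl
    have hwalk : IsAltWalk d f P (walk f P) := by
      refine ⟨rfl, ?_, ?_, ?_, ?_⟩
      · -- endpoint
        obtain ⟨_, _, _, hm, hs⟩ := HB d le_rfl
        exact level_top hm hd hs
      · -- even steps
        intro i hi heven
        obtain ⟨m, rfl⟩ : ∃ m, i = 2*m := by
          rcases heven with ⟨t, ht⟩; exact ⟨t, by omega⟩
        exact (HB m (by omega)).2.2.1
      · -- odd steps
        intro i hi hodd
        obtain ⟨m, rfl⟩ : ∃ m, i = 2*m+1 := by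
          rcases hodd with ⟨t, ht⟩; exact ⟨t, by omega⟩
        exact ⟨m+1, by omega, by omega, HC m (by omega)⟩
      · -- uniqueness of diagonal indices
        intro j hj1 hjd
        obtain ⟨m, rfl⟩ : ∃ m, j = m+1 := ⟨j-1, by omega⟩
        refine ⟨2*m+1, ⟨by omega, ⟨m, by ring⟩, HC m (by omega)⟩, ?_⟩
        rintro i ⟨hile, hodd, hdiag⟩
        obtain ⟨n, rfl⟩ : ∃ n, i = 2*n+1 := by
          rcases hodd with ⟨t, ht⟩; exact ⟨t, by omega⟩
        have hvn := (HB n (by omega)).2.2.2.2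
        have : vsum (walk f P (2*n+1)) = ((m+1 : ℕ) : ℤ) := by
          rcases hdiag with ⟨h1, _⟩ | ⟨h1, _⟩
          · exact diag_vsum (by omega) (Or.inl h1)
          · exact diag_vsum (by omega) (Or.inr h1)
        have : n = m := by push_cast at this; omega
        omega
    refine ⟨walk f P, hwalk, ?_⟩
    intro w' hw'
    obtain ⟨h'0, h'top, h'even, h'odd, h'uniq⟩ := hw'
    intro i
    induction i with
    | zero => intro _; rw [h'0]; rfl
    | succ i ih =>
      intro hi1
      have hwi : w' i = walk f P i := ih (by omega)
      rcases Nat.even_or_odd i with he | ho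
      · obtain ⟨m, rfl⟩ : ∃ m, i = 2*m := by
          rcases he with ⟨t, ht⟩; exact ⟨t, by omega⟩
        obtain ⟨hv, _, hstep, _, _⟩ := HB m (by omega)
        obtain ⟨e, heP, hc⟩ := hstep
        obtain ⟨e', he'P, hc'⟩ := h'even (2*m) (by omega) ⟨m, by ring⟩
        rw [hwi] at hc'
        have hee : e' = e := (hP.2 _ hv).unique ⟨he'P, (edge_two hc').1⟩ ⟨heP, (edge_two hc).1⟩
        subst hee
        rcases hc with ⟨h1, h2⟩ | ⟨h1, h2⟩ <;> rcases hc' with ⟨h1', h2'⟩ | ⟨h1', h2'⟩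
        · rw [h2', h2]
        · exact absurd (h1.symm.trans h1') (fst_ne e')
        · exact absurd (h1'.symm.trans h1) (fst_ne e')
        · rw [h2', h2]
      · obtain ⟨n, rfl⟩ : ∃ n, i = 2*n+1 := by
          rcases ho with ⟨t, ht⟩; exact ⟨t, by omega⟩
        obtain ⟨j, hj1, hjd, hdiag'⟩ := h'odd (2*n+1) (by omega) ⟨n, by ring⟩
        rw [hwi] at hdiag'
        have hCn := HC n (by omega)
        have hvn := (HB n (by omega)).2.2.2.2
        have hjn : j = n + 1 := by
          have : vsum (walk f P (2*n+1)) = (j : ℤ) := by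
            rcases hdiag' with ⟨h1, _⟩ | ⟨h1, _⟩
            · exact diag_vsum hj1 (Or.inl h1)
            · exact diag_vsum hj1 (Or.inr h1)
          push_cast at this; omega
        subst hjn
        rcases hCn with ⟨h1, h2⟩ | ⟨h1, h2⟩ <;> rcases hdiag' with ⟨h1', h2'⟩ | ⟨h1', h2'⟩
        · rw [h2', h2]
        · exact absurd (h1.symm.trans h1') (diag_ne _)
        · exact absurd (h1'.symm.trans h1) (diag_ne _)
        · rw [h2', h2]


/-- (i) Every vertex of the snake graph is an endpoint of at most one
tile diagonal, and the vertices `(0,0)` and `pos f d + (1,1)` lie on no diagonal.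
(ii) For every perfect matching `P` there exists an alternating walk for `P`, and it is
unique (any two such walks agree on all the relevant indices `0,…,2d+1`). -/
theorem altWalk_exists_unique (d : ℕ) (hd : 1 ≤ d) (f : ℕ → Bool) :
    ((∀ v ∈ verts d f, ∀ j j', 1 ≤ j → j ≤ d → 1 ≤ j' → j' ≤ d →
        (v = pos f j + (0, 1) ∨ v = pos f j + (1, 0)) →
        (v = pos f j' + (0, 1) ∨ v = pos f j' + (1, 0)) → j = j') ∧
      (∀ j, 1 ≤ j → j ≤ d →
        ¬(((0, 0) : ℤ × ℤ) = pos f j + (0, 1) ∨ ((0, 0) : ℤ × ℤ) = pos f j + (1, 0)) ∧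
        ¬(pos f d + (1, 1) = pos f j + (0, 1) ∨ pos f d + (1, 1) = pos f j + (1, 0)))) ∧
    (∀ P : Finset Edge, IsPerfectMatching d f P →
      ∃ w : ℕ → ℤ × ℤ, IsAltWalk d f P w ∧
        ∀ w' : ℕ → ℤ × ℤ, IsAltWalk d f P w' → ∀ i ≤ 2 * d + 1, w' i = w i) := by
  exact altWalk_exists_unique' d hd f

end SnakeGraph
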